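/- Let β be a non-negative increasing sequence tending to infinity such that Λ_∞(β) is nuclear and β satisfies: there exists M with β_s ≤ M(β_{s-t} + β_t) for all s > t. Let θ_0 ≠ 0. The lower triangular Toeplitz operator T̂_θ : K(a_{n,k}) → Λ_∞(β) is compact if and only if θ ∈ Λ_∞(β) and there exists m ∈ ℕ such that for all k ∈ ℕ there is C > 0 with e^{kβ_n} ≤ C a_{n,m} for all n ≥ k. -/

import Mathlib

/-!
Testing `T̂_θ` on unit vectors gives the necessary conditions: `T̂_θ e₀ = θ`, and the `n`-th
coordinate of `T̂_θ eₙ` is `θ₀ ≠ 0`, so `|θ₀| e^{kβₙ} ≤ ‖T̂_θ eₙ‖ₖ ≤ C a_{n,m}`.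

Conversely, the growth condition makes the weights submultiplicative,
`e^{kβ_{i+j}} ≤ e^{k(M+1)βᵢ} e^{k(M+1)βⱼ}`, so `‖T̂_θ x‖ₖ` is bounded by the Cauchy product
`‖θ‖_{k(M+1)} · Σ |xᵢ| e^{k(M+1)βᵢ}`. The weight condition, extended to the finitely many
`n < k(M+1)` through a column of `a` that is positive in every row, bounds the last sum by a
multiple of `‖x‖_{m'}`.
-/

open scoped BigOperators
noncomputable section

/-- A Köthe matrix: non-negative entries, each row eventually positive,
rows non-decreasing in the second index. -/
structure IsKotheMatrix (a : ℕ → ℕ → ℝ) : Prop where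
  nonneg : ∀ n k, 0 ≤ a n k
  pos : ∀ n, ∃ k, 0 < a n k
  mono : ∀ n k, a n k ≤ a n (k + 1)

/-- Membership in the Köthe space `K(a)`. -/
def InKothe (a : ℕ → ℕ → ℝ) (x : ℕ → ℝ) : Prop :=
  ∀ k, Summable fun n => |x n| * a n k

/-- The `k`-th seminorm of the Köthe space `K(a)`. -/
def kNorm (a : ℕ → ℕ → ℝ) (k : ℕ) (x : ℕ → ℝ) : ℝ :=
  ∑' n, |x n| * a n k

/-- Grothendieck–Pietsch nuclearity criterion for a Köthe space. -/
def IsNuclearKothe (a : ℕ → ℕ → ℝ) : Prop :=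
  ∀ k, ∃ l, k < l ∧ Summable fun n => a n k / a n l

/-- The `n`-th unit vector. -/
def unitVec (n : ℕ) : ℕ → ℝ := fun j => if j = n then 1 else 0

/-- Weight of the finite type power series space `Λ₁(β)`. -/
def finW (β : ℕ → ℝ) (k : ℕ) (n : ℕ) : ℝ := Real.exp (-(β n) / (k : ℝ))

/-- Weight of the infinite type power series space `Λ_∞(β)`. -/
def infW (β : ℕ → ℝ) (k : ℕ) (n : ℕ) : ℝ := Real.exp ((k : ℝ) * β n)

/-- The `k`-th seminorm of `Λ₁(β)` (for `0 < k`). -/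
def finNorm (β : ℕ → ℝ) (k : ℕ) (x : ℕ → ℝ) : ℝ := ∑' n, |x n| * finW β k n

/-- The `k`-th seminorm of `Λ_∞(β)`. -/
def infNorm (β : ℕ → ℝ) (k : ℕ) (x : ℕ → ℝ) : ℝ := ∑' n, |x n| * infW β k n

/-- Membership in `Λ₁(β)`. -/
def memFin (β : ℕ → ℝ) (x : ℕ → ℝ) : Prop :=
  ∀ k : ℕ, 0 < k → Summable fun n => |x n| * finW β k n

/-- Membership in `Λ_∞(β)`. -/
def memInf (β : ℕ → ℝ) (x : ℕ → ℝ) : Prop :=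
  ∀ k : ℕ, 0 < k → Summable fun n => |x n| * infW β k n

/-- Lower triangular Toeplitz operator `T̂_θ`, `T̂_θ e_n = ∑_{j ≥ n} θ_{j-n} e_j`. -/
def hatT (θ : ℕ → ℝ) (x : ℕ → ℝ) : ℕ → ℝ :=
  fun j => ∑ i ∈ Finset.range (j + 1), θ (j - i) * x i

/-- Upper triangular Toeplitz operator `Ť_θ`, `Ť_θ e_n = ∑_{j ≤ n} θ_{n-j} e_j`. -/
def checkT (θ : ℕ → ℝ) (x : ℕ → ℝ) : ℕ → ℝ :=
  fun j => ∑' i, θ i * x (j + i)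

/-- Operator defined by a matrix acting on sequences. -/
def matOp (t : ℕ → ℕ → ℝ) (x : ℕ → ℝ) : ℕ → ℝ :=
  fun j => ∑' n, t j n * x n

/-- The growth condition (3.5): `β_s ≤ M (β_{s-t} + β_t)` for all `s > t`. -/
def GrowthCond (β : ℕ → ℝ) (M : ℕ) : Prop :=
  ∀ t s : ℕ, t < s → β s ≤ (M : ℝ) * (β (s - t) + β t)

open Finset

lemma hatT_eq_sum_antidiagonal (θ x : ℕ → ℝ) (n : ℕ) :
    hatT θ x n = ∑ p ∈ antidiagonal n, θ p.1 * x p.2 := by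
  rw [← Nat.sum_antidiagonal_swap]
  simp only [Prod.fst_swap, Prod.snd_swap]
  rw [Nat.sum_antidiagonal_eq_sum_range_succ (fun i j => θ j * x i)]
  rfl

lemma hatT_unitVec (θ : ℕ → ℝ) (n j : ℕ) :
    hatT θ (unitVec n) j = if n ≤ j then θ (j - n) else 0 := by
  simp only [hatT, unitVec, mul_ite, mul_one, mul_zero, sum_ite_eq', mem_range, Nat.lt_succ_iff]

lemma hatT_unitVec_zero (θ : ℕ → ℝ) : hatT θ (unitVec 0) = θ := by
  funext j
  simp [hatT_unitVec]

lemma unitVec_inKothe (a : ℕ → ℕ → ℝ) (n : ℕ) : InKothe a (unitVec n) := fun _ =>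
  summable_of_ne_finset_zero (s := {n}) fun j hj => by simp_all [unitVec]

lemma kNorm_unitVec (a : ℕ → ℕ → ℝ) (m n : ℕ) : kNorm a m (unitVec n) = a n m := by
  rw [kNorm, tsum_eq_single n fun j hj => by simp [unitVec, hj]]
  simp [unitVec]

lemma infW_pos (β : ℕ → ℝ) (k n : ℕ) : 0 < infW β k n := Real.exp_pos _

lemma abs_mul_infW_le_infNorm {β y : ℕ → ℝ} {k : ℕ}
    (hy : Summable fun n => |y n| * infW β k n) (n : ℕ) :
    |y n| * infW β k n ≤ infNorm β k y :=
  hy.le_tsum n fun _ _ => mul_nonneg (abs_nonneg _) (infW_pos β k _).le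

lemma GrowthCond.le_add {β : ℕ → ℝ} {M : ℕ} (hM : GrowthCond β M) (hβ0 : ∀ n, 0 ≤ β n)
    (i j : ℕ) : β (i + j) ≤ (M + 1 : ℕ) * (β i + β j) := by
  have hsum : 0 ≤ β i + β j := add_nonneg (hβ0 i) (hβ0 j)
  rcases Nat.eq_zero_or_pos i with rfl | hi
  -- `GrowthCond` excludes `t = s`; the extra `+ 1` in the constant absorbs it.
  · rw [zero_add]
    push_cast
    nlinarith [hβ0 0, (Nat.cast_nonneg M : (0 : ℝ) ≤ M)]
  · have h := hM j (i + j) (by omega)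
    rw [Nat.add_sub_cancel] at h
    push_cast
    nlinarith

lemma infW_add_le {β : ℕ → ℝ} {M : ℕ} (hM : GrowthCond β M) (hβ0 : ∀ n, 0 ≤ β n)
    (k i j : ℕ) : infW β k (i + j) ≤ infW β (k * (M + 1)) i * infW β (k * (M + 1)) j := by
  simp only [infW, ← Real.exp_add, Real.exp_le_exp, Nat.cast_mul, ← mul_add, mul_assoc]
  exact mul_le_mul_of_nonneg_left (hM.le_add hβ0 i j) (Nat.cast_nonneg k)

lemma hatT_weighted_summable_and_tsum_le {w w' : ℕ → ℝ} (hw : ∀ n, 0 ≤ w n)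
    (hw' : ∀ n, 0 ≤ w' n) (hmul : ∀ i j, w (i + j) ≤ w' i * w' j) {θ x : ℕ → ℝ}
    (hθ : Summable fun i => |θ i| * w' i) (hx : Summable fun i => |x i| * w' i) :
    (Summable fun n => |hatT θ x n| * w n) ∧
      ∑' n, |hatT θ x n| * w n ≤ (∑' i, |θ i| * w' i) * ∑' i, |x i| * w' i := by
  set u := fun i => |θ i| * w' i
  set v := fun i => |x i| * w' i
  have huv : Summable fun p : ℕ × ℕ => u p.1 * v p.2 :=
    hθ.mul_of_nonneg hx (fun i => mul_nonneg (abs_nonneg _) (hw' i))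
      (fun i => mul_nonneg (abs_nonneg _) (hw' i))
  have hpt : ∀ n, |hatT θ x n| * w n ≤ ∑ p ∈ antidiagonal n, u p.1 * v p.2 := by
    intro n
    rw [hatT_eq_sum_antidiagonal]
    refine (mul_le_mul_of_nonneg_right (abs_sum_le_sum_abs _ _) (hw n)).trans ?_
    rw [sum_mul]
    refine sum_le_sum fun p hp => ?_
    rw [← mem_antidiagonal.mp hp, abs_mul]
    calc |θ p.1| * |x p.2| * w (p.1 + p.2)
        ≤ |θ p.1| * |x p.2| * (w' p.1 * w' p.2) := by gcongr; exact hmul _ _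
      _ = u p.1 * v p.2 := by ring
  have hconv := summable_sum_mul_antidiagonal_of_summable_mul huv
  have hsum := hconv.of_nonneg_of_le (fun n => mul_nonneg (abs_nonneg _) (hw n)) hpt
  refine ⟨hsum, ?_⟩
  rw [hθ.tsum_mul_tsum_eq_tsum_sum_antidiagonal hx huv]
  exact hsum.tsum_le_tsum hpt hconv

lemma memInf_of_hatT {a : ℕ → ℕ → ℝ} {β θ : ℕ → ℝ}
    (h : ∀ x, InKothe a x → memInf β (hatT θ x)) : memInf β θ := by
  simpa only [hatT_unitVec_zero] using h _ (unitVec_inKothe a 0)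

lemma infW_le_of_infNorm_hatT_le {a : ℕ → ℕ → ℝ} {β θ : ℕ → ℝ} (hθ : θ 0 ≠ 0) {k m : ℕ} {C : ℝ}
    (hmem : ∀ n, Summable fun j => |hatT θ (unitVec n) j| * infW β k j)
    (hC : ∀ x, InKothe a x → infNorm β k (hatT θ x) ≤ C * kNorm a m x) (n : ℕ) :
    infW β k n ≤ C / |θ 0| * a n m := by
  have h := (abs_mul_infW_le_infNorm (hmem n) n).trans (hC _ (unitVec_inKothe a n))
  rw [hatT_unitVec, if_pos le_rfl, Nat.sub_self, kNorm_unitVec] at h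
  rw [div_mul_eq_mul_div, le_div_iff₀ (abs_pos.2 hθ)]
  linarith

namespace IsKotheMatrix

variable {a : ℕ → ℕ → ℝ} (ha : IsKotheMatrix a)
include ha

lemma monotone (n : ℕ) : Monotone (a n) := monotone_nat_of_le_succ (ha.mono n)

lemma exists_forall_lt_pos (N : ℕ) : ∃ m, ∀ n < N, 0 < a n m := by
  induction N with
  | zero => exact ⟨0, by simp⟩
  | succ N ih =>
    obtain ⟨m, hm⟩ := ih
    obtain ⟨l, hl⟩ := ha.pos N
    refine ⟨max m l, fun n hn => ?_⟩
    rcases Nat.lt_succ_iff_lt_or_eq.1 hn with hn | rfl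
    · exact (hm n hn).trans_le (ha.monotone n (le_max_left _ _))
    · exact hl.trans_le (ha.monotone _ (le_max_right _ _))

lemma exists_forall_pos {m N : ℕ} (h : ∀ n, N ≤ n → 0 < a n m) :
    ∃ m', m ≤ m' ∧ ∀ n, 0 < a n m' := by
  obtain ⟨l, hl⟩ := ha.exists_forall_lt_pos N
  refine ⟨max m l, le_max_left _ _, fun n => ?_⟩
  rcases lt_or_ge n N with hn | hn
  · exact (hl n hn).trans_le (ha.monotone n (le_max_right _ _))
  · exact (h n hn).trans_le (ha.monotone n (le_max_left _ _))

end IsKotheMatrix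

lemma exists_forall_le_mul_of_forall_ge {f g : ℕ → ℝ} (hg : ∀ n, 0 < g n) {N : ℕ} {C : ℝ}
    (hC : 0 < C) (h : ∀ n, N ≤ n → f n ≤ C * g n) : ∃ D > 0, ∀ n, f n ≤ D * g n := by
  obtain ⟨B, hB⟩ := ((range N).image fun n => f n / g n).exists_le
  refine ⟨max C B, lt_max_of_lt_left hC, fun n => ?_⟩
  rcases lt_or_ge n N with hn | hn
  · calc f n = f n / g n * g n := (div_mul_cancel₀ _ (hg n).ne').symm
      _ ≤ max C B * g n := mul_le_mul_of_nonneg_right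
          ((hB _ (mem_image_of_mem _ (mem_range.2 hn))).trans (le_max_right _ _)) (hg n).le
  · exact (h n hn).trans (mul_le_mul_of_nonneg_right (le_max_left _ _) (hg n).le)

lemma infNorm_hatT_le {a : ℕ → ℕ → ℝ} {β θ x : ℕ → ℝ} {M k m : ℕ} {D : ℝ}
    (hβ0 : ∀ n, 0 ≤ β n) (hM : GrowthCond β M)
    (hθ : Summable fun i => |θ i| * infW β (k * (M + 1)) i)
    (hD : ∀ n, infW β (k * (M + 1)) n ≤ D * a n m) (hx : InKothe a x) :
    (Summable fun n => |hatT θ x n| * infW β k n) ∧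
      infNorm β k (hatT θ x) ≤ (∑' i, |θ i| * infW β (k * (M + 1)) i) * D * kNorm a m x := by
  have hxw : ∀ i, |x i| * infW β (k * (M + 1)) i ≤ D * (|x i| * a i m) := fun i => by
    rw [mul_left_comm]
    exact mul_le_mul_of_nonneg_left (hD i) (abs_nonneg _)
  have hxs : Summable fun i => |x i| * infW β (k * (M + 1)) i :=
    ((hx m).mul_left D).of_nonneg_of_le (fun i => mul_nonneg (abs_nonneg _) (infW_pos _ _ _).le) hxw
  obtain ⟨hsum, hle⟩ := hatT_weighted_summable_and_tsum_le (fun n => (infW_pos β k n).le)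
    (fun n => (infW_pos _ _ n).le) (infW_add_le hM hβ0 k) hθ hxs
  refine ⟨hsum, hle.trans ?_⟩
  rw [mul_assoc, kNorm, ← tsum_mul_left (a := D)]
  exact mul_le_mul_of_nonneg_left (hxs.tsum_le_tsum hxw ((hx m).mul_left D))
    (tsum_nonneg fun i => mul_nonneg (abs_nonneg _) (infW_pos _ _ _).le)

theorem stmt9_general (a : ℕ → ℕ → ℝ) (ha : IsKotheMatrix a)
    (β : ℕ → ℝ) (hβ0 : ∀ n, 0 ≤ β n)
    (M : ℕ) (hM : GrowthCond β M)
    (θ : ℕ → ℝ) (hθ : θ 0 ≠ 0) :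
    ((∀ x, InKothe a x → memInf β (hatT θ x)) ∧
      ∃ m, ∀ k : ℕ, 0 < k → ∃ C > 0, ∀ x, InKothe a x →
        infNorm β k (hatT θ x) ≤ C * kNorm a m x)
    ↔ (memInf β θ ∧
       ∃ m, ∀ k : ℕ, 0 < k → ∃ C > 0, ∀ n, k ≤ n → infW β k n ≤ C * a n m) := by
  constructor
  · rintro ⟨hmem, m, hbound⟩
    refine ⟨memInf_of_hatT hmem, m, fun k hk => ?_⟩
    obtain ⟨C, hC, hCx⟩ := hbound k hk
    exact ⟨C / |θ 0|, div_pos hC (abs_pos.2 hθ), fun n _ =>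
      infW_le_of_infNorm_hatT_le hθ (fun n => hmem _ (unitVec_inKothe a n) k hk) hCx n⟩
  · rintro ⟨hθmem, m, hw⟩
    obtain ⟨C₁, hC₁, hC₁w⟩ := hw 1 one_pos
    obtain ⟨m', hmm', hpos⟩ := ha.exists_forall_pos fun n hn =>
      pos_of_mul_pos_right ((infW_pos β 1 n).trans_le (hC₁w n hn)) hC₁.le
    have hbound : ∀ k, 0 < k → ∃ C > 0, ∀ x, InKothe a x →
        (Summable fun n => |hatT θ x n| * infW β k n) ∧
          infNorm β k (hatT θ x) ≤ C * kNorm a m' x := by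
      intro k hk
      have hk' : 0 < k * (M + 1) := by positivity
      obtain ⟨C, hC, hCw⟩ := hw _ hk'
      obtain ⟨D, hD, hDw⟩ := exists_forall_le_mul_of_forall_ge hpos hC fun n hn =>
        (hCw n hn).trans (mul_le_mul_of_nonneg_left (ha.monotone n hmm') hC.le)
      have hθpos : 0 < ∑' i, |θ i| * infW β (k * (M + 1)) i :=
        (hθmem _ hk').tsum_pos (fun i => mul_nonneg (abs_nonneg _) (infW_pos _ _ _).le) 0
          (mul_pos (abs_pos.2 hθ) (infW_pos _ _ _))
      exact ⟨_, mul_pos hθpos hD, fun x hx => infNorm_hatT_le hβ0 hM (hθmem _ hk') hDw hx⟩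
    refine ⟨fun x hx k hk => ?_, m', fun k hk => ?_⟩
    · obtain ⟨C, -, hC⟩ := hbound k hk
      exact (hC x hx).1
    · obtain ⟨C, hCpos, hC⟩ := hbound k hk
      exact ⟨C, hCpos, fun x hx => (hC x hx).2⟩

/-- Under nuclearity of `Λ_∞(β)` and the growth condition on `β`,
`T̂_θ : K(a) → Λ_∞(β)` is compact iff `θ ∈ Λ_∞(β)` and there is `m` such that for all
`k` there is `C > 0` with `e^{k β_n} ≤ C a_{n,m}` for all `n ≥ k`. -/
theorem stmt9 (a : ℕ → ℕ → ℝ) (ha : IsKotheMatrix a)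
    (β : ℕ → ℝ) (hβ0 : ∀ n, 0 ≤ β n) (hβm : Monotone β)
    (hβi : Filter.Tendsto β Filter.atTop Filter.atTop)
    (hnuc : ∃ C > 0, ∀ n : ℕ, 1 ≤ n → Real.log n ≤ C * β n)
    (M : ℕ) (hM : GrowthCond β M)
    (θ : ℕ → ℝ) (hθ : θ 0 ≠ 0) :
    ((∀ x, InKothe a x → memInf β (hatT θ x)) ∧
      ∃ m, ∀ k : ℕ, 0 < k → ∃ C > 0, ∀ x, InKothe a x →
        infNorm β k (hatT θ x) ≤ C * kNorm a m x)
    ↔ (memInf β θ ∧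
       ∃ m, ∀ k : ℕ, 0 < k → ∃ C > 0, ∀ n, k ≤ n → infW β k n ≤ C * a n m) :=
  stmt9_general a ha β hβ0 M hM θ hθ
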